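/- arXiv:1709.04282 — 2 statements merged into one kernel-verified Lean document; each statement's English description precedes it below -/
import Mathlib

section
/- For every integer n ≥ 2 and every real data array (f_{r,s}) with r,s ∈ {−n,…,n}, the function R(B₀,…,B₅) = ∑_{r=-n}^{n} ∑_{s=-n}^{n} (f_{r,s} − B₀ − B₁r − B₂s − B₃r² − B₄rs − B₅s²)² attains its unique global minimum over ℝ⁶ at the point defined by B₅ = ∑_r ∑_s [−15(n² + n − 3s²)/(n(n+1)(2n−1)(2n+1)²(2n+3))] f_{r,s}, B₄ = ∑_r ∑_s [9rs/(n²(n+1)²(2n+1)²)] f_{r,s}, B₃ = ∑_r ∑_s [−15(n² + n − 3r²)/(n(n+1)(2n−1)(2n+1)²(2n+3))] f_{r,s}, B₂ = ∑_r ∑_s [3s/(n(n+1)(2n+1)²)] f_{r,s}, B₁ = ∑_r ∑_s [3r/(n(n+1)(2n+1)²)] f_{r,s}, and B₀ = (1/(2n+1)²) ∑_r ∑_s f_{r,s} − (n(n+1)/3)B₃ − (n(n+1)/3)B₅. (Proposition 4.3) -/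
/-!
With `κ = n (n + 1) / 3`, the polynomials `1, x, x² - κ` are orthogonal on `{-n, …, n}`, so the
six products `1, r, s, r² - κ, r s, s² - κ` are orthogonal on the grid and span the same space of
quadratics as the monomials. For an orthogonal family `φₖ`, Pythagoras gives
`‖y - ∑ cₖ φₖ‖² = ‖y - ∑ βₖ φₖ‖² + ∑ (βₖ - cₖ)² ‖φₖ‖²` with `βₖ = ⟪y, φₖ⟫ / ‖φₖ‖²`, so the
least-squares fit is unique and has coordinates `βₖ`. The stated `B₀, …, B₅` are exactly the
`βₖ` rewritten in the monomial basis, where `B₀ = β₀ - κ B₃ - κ B₅`.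
-/

open Finset

section OrthogonalLeastSquares

variable {α ι : Type*} [Fintype ι] (S : Finset α) (φ : ι → α → ℝ)

noncomputable def orthogonalCoeff (y : α → ℝ) (k : ι) : ℝ :=
  (∑ p ∈ S, y p * φ k p) / ∑ p ∈ S, φ k p ^ 2

variable {S φ}

theorem sum_mul_sum_mul_comm (u : α → ℝ) (a : ι → ℝ) :
    ∑ p ∈ S, u p * ∑ k, a k * φ k p = ∑ k, a k * ∑ p ∈ S, u p * φ k p := by
  simp_rw [Finset.mul_sum]
  rw [Finset.sum_comm]
  simp_rw [mul_left_comm]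

theorem sum_sum_mul_mul_of_orthogonal
    (horth : ∀ j k, j ≠ k → ∑ p ∈ S, φ j p * φ k p = 0) (a : ι → ℝ) (j : ι) :
    ∑ p ∈ S, (∑ k, a k * φ k p) * φ j p = a j * ∑ p ∈ S, φ j p ^ 2 := by
  simp_rw [mul_comm (∑ k, _), sum_mul_sum_mul_comm]
  rw [Finset.sum_eq_single j (fun k _ hk => by rw [horth j k hk.symm, mul_zero])
    (by simp)]
  simp_rw [sq]

theorem sum_sub_orthogonalCoeff_mul_eq_zero
    (horth : ∀ j k, j ≠ k → ∑ p ∈ S, φ j p * φ k p = 0) (hφ : ∀ k, ∑ p ∈ S, φ k p ^ 2 ≠ 0)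
    (y : α → ℝ) (j : ι) :
    ∑ p ∈ S, (y p - ∑ k, orthogonalCoeff S φ y k * φ k p) * φ j p = 0 := by
  simp_rw [sub_mul, Finset.sum_sub_distrib, sum_sum_mul_mul_of_orthogonal horth,
    orthogonalCoeff, div_mul_cancel₀ _ (hφ j), sub_self]

theorem sum_sq_sub_sum_mul_eq_of_orthogonal
    (horth : ∀ j k, j ≠ k → ∑ p ∈ S, φ j p * φ k p = 0) (hφ : ∀ k, ∑ p ∈ S, φ k p ^ 2 ≠ 0)
    (y : α → ℝ) (c : ι → ℝ) :
    ∑ p ∈ S, (y p - ∑ k, c k * φ k p) ^ 2 =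
      ∑ p ∈ S, (y p - ∑ k, orthogonalCoeff S φ y k * φ k p) ^ 2 +
        ∑ k, (orthogonalCoeff S φ y k - c k) ^ 2 * ∑ p ∈ S, φ k p ^ 2 := by
  have hres := sum_sub_orthogonalCoeff_mul_eq_zero horth hφ y
  set β := orthogonalCoeff S φ y
  set d : ι → ℝ := fun k => β k - c k
  have hsplit : ∀ p, y p - ∑ k, c k * φ k p =
      (y p - ∑ k, β k * φ k p) + ∑ k, d k * φ k p := by
    intro p
    simp only [d, sub_mul, Finset.sum_sub_distrib]
    ring
  have hcross : ∑ p ∈ S, (y p - ∑ k, β k * φ k p) * ∑ k, d k * φ k p = 0 := by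
    simp_rw [sum_mul_sum_mul_comm, hres, mul_zero, Finset.sum_const_zero]
  have hnorm : ∑ p ∈ S, (∑ k, d k * φ k p) ^ 2 = ∑ k, d k ^ 2 * ∑ p ∈ S, φ k p ^ 2 := by
    simp_rw [sq (∑ k, _), sum_mul_sum_mul_comm, sum_sum_mul_mul_of_orthogonal horth, ← mul_assoc,
      ← sq]
  simp_rw [hsplit, add_sq, Finset.sum_add_distrib, mul_assoc, ← Finset.mul_sum, hcross, hnorm]
  ring

theorem sum_sq_sub_orthogonalCoeff_mul_lt
    (horth : ∀ j k, j ≠ k → ∑ p ∈ S, φ j p * φ k p = 0) (hφ : ∀ k, 0 < ∑ p ∈ S, φ k p ^ 2)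
    (y : α → ℝ) {c : ι → ℝ} (hc : c ≠ orthogonalCoeff S φ y) :
    ∑ p ∈ S, (y p - ∑ k, orthogonalCoeff S φ y k * φ k p) ^ 2 <
      ∑ p ∈ S, (y p - ∑ k, c k * φ k p) ^ 2 := by
  rw [sum_sq_sub_sum_mul_eq_of_orthogonal horth (fun k => (hφ k).ne') y c]
  obtain ⟨k, hk⟩ := Function.ne_iff.mp hc
  refine lt_add_of_pos_right _ (Finset.sum_pos' (fun j _ => mul_nonneg (sq_nonneg _) (hφ j).le)
    ⟨k, Finset.mem_univ k, mul_pos (sq_pos_of_ne_zero (sub_ne_zero.mpr hk.symm)) (hφ k)⟩)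

end OrthogonalLeastSquares

section SymmetricInterval

theorem sum_Icc_neg_add_one {M : Type*} [AddCommMonoid M] {n : ℤ} (hn : 0 ≤ n) (g : ℤ → M) :
    ∑ r ∈ Icc (-(n + 1)) (n + 1), g r = g (-(n + 1)) + ∑ r ∈ Icc (-n) n, g r + g (n + 1) := by
  have h : Icc (-(n + 1)) (n + 1) = insert (-(n + 1)) (insert (n + 1) (Icc (-n) n)) := by
    ext x; simp only [mem_Icc, mem_insert]; omega
  rw [h, sum_insert (by simp only [mem_insert, mem_Icc]; omega),
    sum_insert (by simp only [mem_Icc]; omega), add_assoc, add_comm (g (n + 1))]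

theorem sum_Icc_neg_pow_of_odd {k : ℕ} (hk : Odd k) (n : ℤ) :
    ∑ r ∈ Icc (-n) n, (r : ℝ) ^ k = 0 := by
  have h : ∑ r ∈ Icc (-n) n, (r : ℝ) ^ k = ∑ r ∈ Icc (-n) n, ((-r : ℤ) : ℝ) ^ k :=
    sum_nbij' (fun r => -r) (fun r => -r) (by simp only [mem_Icc]; omega)
    (by simp only [mem_Icc]; omega) (by simp) (by simp) (by simp)
  simp only [Int.cast_neg, hk.neg_pow, sum_neg_distrib] at h
  linarith

theorem sum_Icc_neg_const {n : ℤ} (hn : 0 ≤ n) (c : ℝ) :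
    ∑ _r ∈ Icc (-n) n, c = (2 * n + 1) * c := by
  rw [sum_const, Int.card_Icc, nsmul_eq_mul, ← Int.cast_natCast, Int.toNat_of_nonneg (by omega)]
  push_cast; ring

theorem sum_Icc_neg_sq {n : ℤ} (hn : 0 ≤ n) :
    ∑ r ∈ Icc (-n) n, (r : ℝ) ^ 2 = n * (n + 1) * (2 * n + 1) / 3 := by
  induction n, hn using Int.leInduction with
  | base => simp
  | succ n hn ih => rw [sum_Icc_neg_add_one hn, ih]; push_cast; ring

theorem sum_Icc_neg_pow_four {n : ℤ} (hn : 0 ≤ n) :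
    ∑ r ∈ Icc (-n) n, (r : ℝ) ^ 4 = n * (n + 1) * (2 * n + 1) * (3 * n ^ 2 + 3 * n - 1) / 15 := by
  induction n, hn using Int.leInduction with
  | base => simp
  | succ n hn ih => rw [sum_Icc_neg_add_one hn, ih]; push_cast; ring

end SymmetricInterval

section GramPolynomials

noncomputable def gramPoly (n : ℤ) : Fin 3 → ℤ → ℝ :=
  ![fun _ => 1, fun r => r, fun r => (r : ℝ) ^ 2 - n * (n + 1) / 3]

noncomputable def gramPolyNormSq (n : ℤ) : Fin 3 → ℝ :=
  ![2 * n + 1, n * (n + 1) * (2 * n + 1) / 3,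
    n * (n + 1) * (2 * n - 1) * (2 * n + 1) * (2 * n + 3) / 45]

variable {n : ℤ}

theorem sum_gramPoly_mul_of_ne (hn : 0 ≤ n) {i j : Fin 3} (hij : i ≠ j) :
    ∑ r ∈ Icc (-n) n, gramPoly n i r * gramPoly n j r = 0 := by
  have h1 : ∑ r ∈ Icc (-n) n, (r : ℝ) = 0 := by simpa using sum_Icc_neg_pow_of_odd odd_one n
  have h3 := sum_Icc_neg_pow_of_odd (k := 3) (by decide) n
  fin_cases i <;> fin_cases j <;>
    simp only [gramPoly, Fin.zero_eta, Fin.mk_one, Fin.reduceFinMk, Fin.isValue, ne_eq,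
      not_true_eq_false, Matrix.cons_val_zero, Matrix.cons_val_one, Matrix.cons_val, one_mul,
      mul_one, mul_sub, sub_mul, ← pow_succ, ← pow_succ', Nat.reduceAdd, sum_sub_distrib, ← sum_mul,
      ← mul_sum, sum_Icc_neg_const hn, sum_Icc_neg_sq hn, h1, h3, zero_mul, mul_zero,
      sub_self] at hij ⊢
  all_goals ring

theorem sum_gramPoly_sq (hn : 0 ≤ n) (i : Fin 3) :
    ∑ r ∈ Icc (-n) n, gramPoly n i r ^ 2 = gramPolyNormSq n i := by
  fin_cases i <;>
    simp only [gramPoly, gramPolyNormSq, Fin.zero_eta, Fin.mk_one, Fin.reduceFinMk, Fin.isValue,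
      Matrix.cons_val_zero, Matrix.cons_val_one, Matrix.cons_val, one_pow, mul_one, sub_sq,
      ← pow_mul, Nat.reduceMul, sum_add_distrib, sum_sub_distrib, ← sum_mul, ← mul_sum,
      sum_Icc_neg_const hn, sum_Icc_neg_sq hn, sum_Icc_neg_pow_four hn]
  all_goals ring

theorem gramPolyNormSq_pos (hn : 1 ≤ n) (i : Fin 3) : 0 < gramPolyNormSq n i := by
  have hn' : (1 : ℝ) ≤ n := by exact_mod_cast hn
  have h2n : (0 : ℝ) < 2 * n - 1 := by linarith
  fin_cases i <;> simp only [gramPolyNormSq, Fin.zero_eta, Fin.mk_one, Fin.reduceFinMk,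
    Matrix.cons_val_zero, Matrix.cons_val_one, Matrix.cons_val] <;> positivity

end GramPolynomials

theorem sum_product_mul_mul {α β : Type*} (A : Finset α) (B : Finset β) (u u' : α → ℝ)
    (v v' : β → ℝ) :
    ∑ p ∈ A ×ˢ B, u p.1 * v p.2 * (u' p.1 * v' p.2) =
      (∑ a ∈ A, u a * u' a) * ∑ b ∈ B, v b * v' b := by
  rw [sum_product, sum_mul_sum]
  exact sum_congr rfl fun a _ => sum_congr rfl fun b _ => by ring

theorem sum_sum_mul_eq_div {α β : Type*} (A : Finset α) (B : Finset β) (f : α → β → ℝ)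
    {w : α → β → ℝ} {g : α × β → ℝ} {N : ℝ} (hw : ∀ a b, w a b = g (a, b) / N) :
    ∑ a ∈ A, ∑ b ∈ B, w a b * f a b = (∑ p ∈ A ×ˢ B, f p.1 p.2 * g p) / N := by
  rw [sum_product, sum_div]
  exact sum_congr rfl fun a _ => by
    rw [sum_div]; exact sum_congr rfl fun b _ => by rw [hw]; ring

section QuadraticBasis

def quadDegree : Fin 6 → Fin 3 × Fin 3 := ![(0, 0), (1, 0), (0, 1), (2, 0), (1, 1), (0, 2)]

noncomputable def quadBasis (n : ℤ) (k : Fin 6) (p : ℤ × ℤ) : ℝ :=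
  gramPoly n (quadDegree k).1 p.1 * gramPoly n (quadDegree k).2 p.2

/-- Coordinates of `b0 + b1 x + b2 y + b3 x² + b4 x y + b5 y²` in the basis `quadBasis n`. -/
noncomputable def quadCoords (n : ℤ) (b0 b1 b2 b3 b4 b5 : ℝ) : Fin 6 → ℝ :=
  ![b0 + n * (n + 1) / 3 * b3 + n * (n + 1) / 3 * b5, b1, b2, b3, b4, b5]

variable {n : ℤ}

theorem quadBasis_orthogonal (hn : 0 ≤ n) {j k : Fin 6} (hjk : j ≠ k) :
    ∑ p ∈ Icc (-n) n ×ˢ Icc (-n) n, quadBasis n j p * quadBasis n k p = 0 := by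
  have hdeg : quadDegree j ≠ quadDegree k := fun h => hjk (by revert h; revert j k; decide)
  simp only [quadBasis, sum_product_mul_mul]
  by_cases h : (quadDegree j).1 = (quadDegree k).1
  · rw [sum_gramPoly_mul_of_ne hn fun h' => hdeg (Prod.ext h h'), mul_zero]
  · rw [sum_gramPoly_mul_of_ne hn h, zero_mul]

theorem sum_quadBasis_sq (hn : 0 ≤ n) (k : Fin 6) :
    ∑ p ∈ Icc (-n) n ×ˢ Icc (-n) n, quadBasis n k p ^ 2 =
      gramPolyNormSq n (quadDegree k).1 * gramPolyNormSq n (quadDegree k).2 := by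
  simp_rw [sq, quadBasis, sum_product_mul_mul, ← sq, sum_gramPoly_sq hn]

theorem sum_quadCoords_mul_quadBasis (b0 b1 b2 b3 b4 b5 : ℝ) (r s : ℤ) :
    ∑ k, quadCoords n b0 b1 b2 b3 b4 b5 k * quadBasis n k (r, s) =
      b0 + b1 * r + b2 * s + b3 * r ^ 2 + b4 * r * s + b5 * s ^ 2 := by
  simp only [Fin.sum_univ_six, quadCoords, quadBasis, quadDegree, gramPoly, Fin.isValue,
    Matrix.cons_val_zero, Matrix.cons_val_one, Matrix.cons_val]
  ring

theorem sum_quadBasis_sq_pos (hn : 1 ≤ n) (k : Fin 6) :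
    0 < ∑ p ∈ Icc (-n) n ×ˢ Icc (-n) n, quadBasis n k p ^ 2 := by
  rw [sum_quadBasis_sq (by omega)]
  exact mul_pos (gramPolyNormSq_pos hn _) (gramPolyNormSq_pos hn _)

theorem quadCoords_ne {b0 b1 b2 b3 b4 b5 B0 B1 B2 B3 B4 B5 : ℝ}
    (h : (b0, b1, b2, b3, b4, b5) ≠ (B0, B1, B2, B3, B4, B5)) :
    quadCoords n b0 b1 b2 b3 b4 b5 ≠ quadCoords n B0 B1 B2 B3 B4 B5 := by
  intro hc
  simp only [quadCoords, funext_iff, Fin.forall_fin_succ, Fin.isValue, Matrix.cons_val_zero,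
    Matrix.cons_val_succ, Matrix.cons_val_fin_one, forall_const] at hc
  obtain ⟨h0, rfl, rfl, rfl, rfl, rfl⟩ := hc
  exact h (by simpa using h0)

end QuadraticBasis

/-- Proposition 4.3: ordinary least squares fitting of the bivariate quadratic
polynomial `B₀ + B₁x + B₂y + B₃x² + B₄xy + B₅y²` to the (2n+1)² observations
`(r, s, f r s)`, `r, s = -n, …, n`, attains its unique global minimum at the
point `(B₀,…,B₅)` given by the stated explicit formulas. -/
theorem stmt_4 (n : ℤ) (hn : 2 ≤ n) (f : ℤ → ℤ → ℝ)
    (B0 B1 B2 B3 B4 B5 : ℝ)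
    (hB5 : B5 = ∑ r ∈ Finset.Icc (-n) n, ∑ s ∈ Finset.Icc (-n) n,
      (-15) * ((n : ℝ) ^ 2 + (n : ℝ) - 3 * (s : ℝ) ^ 2) /
        ((n : ℝ) * ((n : ℝ) + 1) * (2 * (n : ℝ) - 1) * (2 * (n : ℝ) + 1) ^ 2
          * (2 * (n : ℝ) + 3)) * f r s)
    (hB4 : B4 = ∑ r ∈ Finset.Icc (-n) n, ∑ s ∈ Finset.Icc (-n) n,
      9 * (r : ℝ) * (s : ℝ) /
        ((n : ℝ) ^ 2 * ((n : ℝ) + 1) ^ 2 * (2 * (n : ℝ) + 1) ^ 2) * f r s)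
    (hB3 : B3 = ∑ r ∈ Finset.Icc (-n) n, ∑ s ∈ Finset.Icc (-n) n,
      (-15) * ((n : ℝ) ^ 2 + (n : ℝ) - 3 * (r : ℝ) ^ 2) /
        ((n : ℝ) * ((n : ℝ) + 1) * (2 * (n : ℝ) - 1) * (2 * (n : ℝ) + 1) ^ 2
          * (2 * (n : ℝ) + 3)) * f r s)
    (hB2 : B2 = ∑ r ∈ Finset.Icc (-n) n, ∑ s ∈ Finset.Icc (-n) n,
      3 * (s : ℝ) / ((n : ℝ) * ((n : ℝ) + 1) * (2 * (n : ℝ) + 1) ^ 2) * f r s)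
    (hB1 : B1 = ∑ r ∈ Finset.Icc (-n) n, ∑ s ∈ Finset.Icc (-n) n,
      3 * (r : ℝ) / ((n : ℝ) * ((n : ℝ) + 1) * (2 * (n : ℝ) + 1) ^ 2) * f r s)
    (hB0 : B0 = (1 / (2 * (n : ℝ) + 1) ^ 2) *
        (∑ r ∈ Finset.Icc (-n) n, ∑ s ∈ Finset.Icc (-n) n, f r s)
      - (n : ℝ) * ((n : ℝ) + 1) / 3 * B3 - (n : ℝ) * ((n : ℝ) + 1) / 3 * B5) :
    ∀ b0 b1 b2 b3 b4 b5 : ℝ, (b0, b1, b2, b3, b4, b5) ≠ (B0, B1, B2, B3, B4, B5) →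
      (∑ r ∈ Finset.Icc (-n) n, ∑ s ∈ Finset.Icc (-n) n,
        (f r s - B0 - B1 * (r : ℝ) - B2 * (s : ℝ) - B3 * (r : ℝ) ^ 2
          - B4 * (r : ℝ) * (s : ℝ) - B5 * (s : ℝ) ^ 2) ^ 2) <
      (∑ r ∈ Finset.Icc (-n) n, ∑ s ∈ Finset.Icc (-n) n,
        (f r s - b0 - b1 * (r : ℝ) - b2 * (s : ℝ) - b3 * (r : ℝ) ^ 2
          - b4 * (r : ℝ) * (s : ℝ) - b5 * (s : ℝ) ^ 2) ^ 2) := by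
  intro b0 b1 b2 b3 b4 b5 hne
  have hn0 : 0 ≤ n := by omega
  set y : ℤ × ℤ → ℝ := fun p => f p.1 p.2
  have hcoeff : quadCoords n B0 B1 B2 B3 B4 B5 =
      orthogonalCoeff (Icc (-n) n ×ˢ Icc (-n) n) (quadBasis n) y := by
    funext k
    rw [orthogonalCoeff, sum_quadBasis_sq hn0]
    fin_cases k
    all_goals simp only [quadCoords, quadDegree, gramPolyNormSq, quadBasis, gramPoly, Fin.isValue,
      Fin.zero_eta, Fin.mk_one, Fin.reduceFinMk, Matrix.cons_val_zero, Matrix.cons_val_one,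
      Matrix.cons_val]
    · rw [show B0 + n * (n + 1) / 3 * B3 + n * (n + 1) / 3 * B5 =
          ∑ r ∈ Icc (-n) n, ∑ s ∈ Icc (-n) n, 1 / (2 * (n : ℝ) + 1) ^ 2 * f r s by
        rw [hB0, mul_sum]; simp_rw [mul_sum]; ring]
      refine sum_sum_mul_eq_div _ _ _ fun r s => ?_
      field_simp
    · rw [hB1]; refine sum_sum_mul_eq_div _ _ _ fun r s => ?_; field_simp
    · rw [hB2]; refine sum_sum_mul_eq_div _ _ _ fun r s => ?_; field_simp
    · rw [hB3]; refine sum_sum_mul_eq_div _ _ _ fun r s => ?_; field_simp; ring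
    · rw [hB4]; refine sum_sum_mul_eq_div _ _ _ fun r s => ?_; field_simp; ring
    · rw [hB5]; refine sum_sum_mul_eq_div _ _ _ fun r s => ?_; field_simp; ring
  have hlt := sum_sq_sub_orthogonalCoeff_mul_lt (fun _ _ => quadBasis_orthogonal hn0)
    (sum_quadBasis_sq_pos (by omega)) y (hcoeff ▸ quadCoords_ne hne)
  rw [← hcoeff, sum_product, sum_product] at hlt
  simpa only [sum_quadCoords_mul_quadBasis, sub_add_eq_sub_sub] using hlt
end

section
/- Let n ≥ 2 be an integer, (f_r)_{r=-n+1}^{n} real data and w_r > 0 for each r ∈ {−n+1,…,n}. Then λ₀ ≠ 0, and the unique global minimizer (β₀,β₁,β₂) ∈ ℝ³ of ∑_{r=-n+1}^{n} w_r (f_r − β₀ − β₁r − β₂r²)² satisfies β₀ + (1/4)β₁ + (1/16)β₂ = (α₀/(16λ₀)) ∑_{r=-n+1}^{n} q₁(r) w_r f_r and β₀ + (3/4)β₁ + (9/16)β₂ = (α₀/(16λ₀)) ∑_{r=-n+1}^{n} q₂(r) w_r f_r, where q₁(r) = r²α₀α₂ + 4α₀α₄r − 4α₀α₃r² − α₀α₃r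 − α₂² − 4α₂²r − 16r²α₂² + α₁α₂r + 4α₂α₃ + 4α₁α₂r² + 16α₂α₃r + 16α₂α₄ − 16α₁α₄r + α₁α₃ − 16α₃² − r²α₁² + 16r²α₁α₃ − 4α₁α₄ and q₂(r) = 9r²α₀α₂ + 12α₀α₄r − 9α₀α₃r − 12α₀α₃r² − 12α₂²r − 9α₂² − 16r²α₂² + 9α₁α₂r + 12α₁α₂r² + 16α₂α₄ + 12α₂α₃ + 16α₂α₃r + 9α₁α₃ − 16α₁α₄r − 12α₁α₄ − 9r²α₁² + 16r²α₁α₃ − 16α₃²; these are the two refinement rules (2.34) of the family of 2n-point schemes D_{2n,2}. -/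
/-!
With `H = (α_{j+k})_{j,k ≤ 2}` the Gram matrix of `1, r, r²` for the weights, the error splits
as `E p = E β + (p - β)ᵀ H (p - β)` whenever `β` solves the normal equations `H β = m`, where
`m_b = ∑ rᵇ w_r f_r`.
`H` is positive definite since a nonzero quadratic cannot vanish at the three nodes `-1, 0, 1`;
hence `det H > 0`, `λ₀ = α₀ det H > 0`, and `β = H⁻¹ m` is the unique minimizer. By Cramer's rule
the fitted value at `t` is `∑_r v(t)ᵀ adj(H) v(r) w_r f_r / det H` with `v(t) = (1, t, t²)`,
which for `t = 1/4, 3/4` is the stated formula because `α₀ / λ₀ = 1 / det H`.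
-/

def quadEval (c : ℝ × ℝ × ℝ) (t : ℝ) : ℝ := c.1 + c.2.1 * t + c.2.2 * t ^ 2

theorem quadEval_sub (c d : ℝ × ℝ × ℝ) (t : ℝ) :
    quadEval (c - d) t = quadEval c t - quadEval d t := by
  simp only [quadEval, Prod.fst_sub, Prod.snd_sub]; ring

theorem eq_zero_of_quadEval_eq_zero {c : ℝ × ℝ × ℝ} {s t u : ℝ}
    (hst : s ≠ t) (hsu : s ≠ u) (htu : t ≠ u)
    (hs : quadEval c s = 0) (ht : quadEval c t = 0) (hu : quadEval c u = 0) : c = 0 := by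
  obtain ⟨c0, c1, c2⟩ := c
  simp only [quadEval] at hs ht hu
  have hst' : c1 + c2 * (s + t) = 0 :=
    (mul_eq_zero.1 (by linear_combination hs - ht : (s - t) * (c1 + c2 * (s + t)) = 0)).resolve_left
      (sub_ne_zero.2 hst)
  have hsu' : c1 + c2 * (s + u) = 0 :=
    (mul_eq_zero.1 (by linear_combination hs - hu : (s - u) * (c1 + c2 * (s + u)) = 0)).resolve_left
      (sub_ne_zero.2 hsu)
  have h2 : c2 = 0 :=
    (mul_eq_zero.1 (by linear_combination hst' - hsu' : c2 * (t - u) = 0)).resolve_right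
      (sub_ne_zero.2 htu)
  have h1 : c1 = 0 := by simpa [h2] using hst'
  have h0 : c0 = 0 := by simpa [h1, h2] using hs
  simp [h0, h1, h2]

section Hankel

variable (a : ℕ → ℝ)

/-- `cᵀ H c` for the Hankel matrix `H = (a (j + k))_{j,k ≤ 2}`. -/
def hankelForm (c : ℝ × ℝ × ℝ) : ℝ :=
  c.1 ^ 2 * a 0 + 2 * c.1 * c.2.1 * a 1 + (2 * c.1 * c.2.2 + c.2.1 ^ 2) * a 2
    + 2 * c.2.1 * c.2.2 * a 3 + c.2.2 ^ 2 * a 4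

def hankelDet : ℝ :=
  a 0 * (a 2 * a 4 - a 3 ^ 2) - a 1 * (a 1 * a 4 - a 2 * a 3) + a 2 * (a 1 * a 3 - a 2 ^ 2)

/-- Cramer's rule for `H β = (m 0, m 1, m 2)`, written with the (symmetric) adjugate of `H`. -/
noncomputable def hankelSolve (m : ℕ → ℝ) : ℝ × ℝ × ℝ :=
  (((a 2 * a 4 - a 3 ^ 2) * m 0 + (a 2 * a 3 - a 1 * a 4) * m 1 + (a 1 * a 3 - a 2 ^ 2) * m 2)
      / hankelDet a,
    ((a 2 * a 3 - a 1 * a 4) * m 0 + (a 0 * a 4 - a 2 ^ 2) * m 1 + (a 1 * a 2 - a 0 * a 3) * m 2)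
      / hankelDet a,
    ((a 1 * a 3 - a 2 ^ 2) * m 0 + (a 1 * a 2 - a 0 * a 3) * m 1 + (a 0 * a 2 - a 1 ^ 2) * m 2)
      / hankelDet a)

variable {a}

theorem hankelSolve_spec (ha : hankelDet a ≠ 0) (m : ℕ → ℝ) {b : ℕ} (hb : b < 3) :
    a b * (hankelSolve a m).1 + a (b + 1) * (hankelSolve a m).2.1
      + a (b + 2) * (hankelSolve a m).2.2 = m b := by
  simp only [hankelSolve]
  interval_cases b <;> · field_simp; simp only [hankelDet]; ring

theorem pos_and_hankelDet_pos_of_hankelForm_pos (h : ∀ c ≠ 0, 0 < hankelForm a c) :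
    0 < a 0 ∧ 0 < hankelDet a := by
  have h0 : 0 < a 0 := by simpa [hankelForm] using h (1, 0, 0) (by simp)
  have hχ : 0 < a 0 * (a 0 * a 2 - a 1 ^ 2) := by
    have := h (a 1, -a 0, 0) (by simp [h0.ne'])
    simp only [hankelForm] at this
    linear_combination this
  have hχ0 : 0 < a 0 * a 2 - a 1 ^ 2 := pos_of_mul_pos_right hχ h0.le
  -- the third column `c` of the adjugate satisfies `cᵀ H c = det H · c.2.2`
  have hD := h (a 1 * a 3 - a 2 ^ 2, a 1 * a 2 - a 0 * a 3, a 0 * a 2 - a 1 ^ 2) (by simp [hχ0.ne'])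
  refine ⟨h0, pos_of_mul_pos_left (?_ : 0 < hankelDet a * (a 0 * a 2 - a 1 ^ 2)) hχ0.le⟩
  simp only [hankelForm] at hD
  simp only [hankelDet]
  linear_combination hD

end Hankel

section LeastSquares

variable {ι : Type*} (S : Finset ι) (w x f : ι → ℝ)

def moment (b : ℕ) : ℝ := ∑ i ∈ S, x i ^ b * w i

def lsqError (p : ℝ × ℝ × ℝ) : ℝ := ∑ i ∈ S, w i * (f i - quadEval p (x i)) ^ 2

/-- The data moments `∑ xᵢᵇ wᵢ fᵢ` are the moments for the weights `w * f`. -/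
noncomputable def fitCoeffs : ℝ × ℝ × ℝ := hankelSolve (moment S w x) (moment S (w * f) x)

theorem sum_mul_quadEval_sq (c : ℝ × ℝ × ℝ) :
    ∑ i ∈ S, w i * quadEval c (x i) ^ 2 = hankelForm (moment S w x) c := by
  simp only [hankelForm, moment, quadEval, Finset.mul_sum, ← Finset.sum_add_distrib]
  exact Finset.sum_congr rfl fun i _ => by ring

theorem sum_residual_mul_pow (p : ℝ × ℝ × ℝ) (b : ℕ) :
    ∑ i ∈ S, w i * (f i - quadEval p (x i)) * x i ^ b = moment S (w * f) x b
      - (moment S w x b * p.1 + moment S w x (b + 1) * p.2.1 + moment S w x (b + 2) * p.2.2) := by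
  simp only [moment, quadEval, Pi.mul_apply, Finset.sum_mul, ← Finset.sum_add_distrib,
    ← Finset.sum_sub_distrib]
  exact Finset.sum_congr rfl fun i _ => by ring

variable {S w x f}

theorem sum_residual_mul_quadEval {p : ℝ × ℝ × ℝ}
    (hp : ∀ b < 3, ∑ i ∈ S, w i * (f i - quadEval p (x i)) * x i ^ b = 0) (d : ℝ × ℝ × ℝ) :
    ∑ i ∈ S, w i * (f i - quadEval p (x i)) * quadEval d (x i) = 0 := by
  have h0 := hp 0 (by norm_num)
  have h1 := hp 1 (by norm_num)
  have h2 := hp 2 (by norm_num)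
  calc ∑ i ∈ S, w i * (f i - quadEval p (x i)) * quadEval d (x i)
      = d.1 * ∑ i ∈ S, w i * (f i - quadEval p (x i)) * x i ^ 0
        + d.2.1 * ∑ i ∈ S, w i * (f i - quadEval p (x i)) * x i ^ 1
        + d.2.2 * ∑ i ∈ S, w i * (f i - quadEval p (x i)) * x i ^ 2 := by
        simp only [quadEval, Finset.mul_sum, ← Finset.sum_add_distrib]
        exact Finset.sum_congr rfl fun i _ => by ring
    _ = 0 := by rw [h0, h1, h2]; ring

theorem lsqError_eq_add {p : ℝ × ℝ × ℝ}
    (hp : ∀ b < 3, ∑ i ∈ S, w i * (f i - quadEval p (x i)) * x i ^ b = 0) (q : ℝ × ℝ × ℝ) :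
    lsqError S w x f q = lsqError S w x f p + ∑ i ∈ S, w i * quadEval (q - p) (x i) ^ 2 := by
  have hcross := sum_residual_mul_quadEval hp (q - p)
  simp only [lsqError, quadEval_sub] at hcross ⊢
  have hsplit : ∀ i, w i * (f i - quadEval q (x i)) ^ 2 = w i * (f i - quadEval p (x i)) ^ 2
      + w i * (quadEval q (x i) - quadEval p (x i)) ^ 2
      - 2 * (w i * (f i - quadEval p (x i)) * (quadEval q (x i) - quadEval p (x i))) :=
    fun i => by ring
  simp only [hsplit, Finset.sum_sub_distrib, Finset.sum_add_distrib, ← Finset.mul_sum, hcross,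
    mul_zero, sub_zero]

variable (hw : ∀ i ∈ S, 0 < w i) (hx : 2 < (S.image x).card)
include hw

theorem sum_mul_quadEval_sq_nonneg (c : ℝ × ℝ × ℝ) : 0 ≤ ∑ i ∈ S, w i * quadEval c (x i) ^ 2 :=
  Finset.sum_nonneg fun i hi => mul_nonneg (hw i hi).le (sq_nonneg _)

include hx

theorem eq_zero_of_sum_mul_quadEval_sq_eq_zero {c : ℝ × ℝ × ℝ}
    (hc : ∑ i ∈ S, w i * quadEval c (x i) ^ 2 = 0) : c = 0 := by
  have hroot : ∀ t ∈ S.image x, quadEval c t = 0 := by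
    simp only [Finset.mem_image, forall_exists_index, and_imp, forall_apply_eq_imp_iff₂]
    intro i hi
    have := (Finset.sum_eq_zero_iff_of_nonneg fun j hj => mul_nonneg (hw j hj).le (sq_nonneg _)).1
      hc i hi
    simpa [(hw i hi).ne'] using this
  obtain ⟨s, hs, t, ht, u, hu, hst, hsu, htu⟩ := Finset.two_lt_card.1 hx
  exact eq_zero_of_quadEval_eq_zero hst hsu htu (hroot s hs) (hroot t ht) (hroot u hu)

theorem hankelForm_moment_pos {c : ℝ × ℝ × ℝ} (hc : c ≠ 0) : 0 < hankelForm (moment S w x) c := by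
  rw [← sum_mul_quadEval_sq]
  exact (sum_mul_quadEval_sq_nonneg hw c).lt_of_ne fun h =>
    hc (eq_zero_of_sum_mul_quadEval_sq_eq_zero hw hx h.symm)

theorem lsqError_isMin_iff (p : ℝ × ℝ × ℝ) :
    (∀ q, lsqError S w x f p ≤ lsqError S w x f q) ↔ p = fitCoeffs S w x f := by
  have hD := (pos_and_hankelDet_pos_of_hankelForm_pos fun c hc => hankelForm_moment_pos hw hx hc).2
  have hnormal : ∀ b < 3, ∑ i ∈ S, w i * (f i - quadEval (fitCoeffs S w x f) (x i)) * x i ^ b = 0 :=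
    fun b hb => by rw [sum_residual_mul_pow, fitCoeffs, hankelSolve_spec hD.ne' _ hb, sub_self]
  constructor
  · intro hp
    have hle := hp (fitCoeffs S w x f)
    rw [lsqError_eq_add hnormal p] at hle
    exact sub_eq_zero.1 (eq_zero_of_sum_mul_quadEval_sq_eq_zero hw hx
      (le_antisymm (by linarith) (sum_mul_quadEval_sq_nonneg hw _)))
  · rintro rfl q
    rw [lsqError_eq_add hnormal q]
    linarith [sum_mul_quadEval_sq_nonneg (x := x) hw (q - fitCoeffs S w x f)]

omit hw hx

theorem quadEval_fitCoeffs (t : ℝ) : quadEval (fitCoeffs S w x f) t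
    = ∑ i ∈ S, quadEval (hankelSolve (moment S w x) (x i ^ ·)) t * w i * f i := by
  rw [fitCoeffs]
  generalize moment S w x = a
  simp only [hankelSolve, quadEval, moment, Pi.mul_apply, Finset.mul_sum, Finset.sum_mul,
    Finset.sum_div, ← Finset.sum_add_distrib]
  exact Finset.sum_congr rfl fun i _ => by ring

end LeastSquares

/-- The refinement rules (2.34) of the family of 2n-point schemes `D_{2n,2}`:
weighted least squares fitting of a parabola to `(r, f r)`, `r = -n+1,…,n`,
with positive weights. Then `λ₀ ≠ 0` and the unique minimizer `(β₀, β₁, β₂)`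
satisfies the two stated evaluation formulas at `1/4` and `3/4`. -/
theorem stmt_10 (n : ℤ) (hn : 2 ≤ n) (f w : ℤ → ℝ)
    (hw : ∀ r ∈ Finset.Icc (-n + 1) n, 0 < w r)
    (α0 α1 α2 α3 α4 χ0 χ1 χ3 lam0 : ℝ)
    (hα0 : α0 = ∑ r ∈ Finset.Icc (-n + 1) n, w r)
    (hα1 : α1 = ∑ r ∈ Finset.Icc (-n + 1) n, (r : ℝ) * w r)
    (hα2 : α2 = ∑ r ∈ Finset.Icc (-n + 1) n, (r : ℝ) ^ 2 * w r)
    (hα3 : α3 = ∑ r ∈ Finset.Icc (-n + 1) n, (r : ℝ) ^ 3 * w r)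
    (hα4 : α4 = ∑ r ∈ Finset.Icc (-n + 1) n, (r : ℝ) ^ 4 * w r)
    (hχ0 : χ0 = α0 * α2 - α1 ^ 2)
    (hχ1 : χ1 = α0 * α3 - α1 * α2)
    (hχ3 : χ3 = α0 * α4 - α2 ^ 2)
    (hlam0 : lam0 = χ0 * χ3 - χ1 ^ 2)
    (E : ℝ × ℝ × ℝ → ℝ)
    (hE : ∀ p : ℝ × ℝ × ℝ, E p = ∑ r ∈ Finset.Icc (-n + 1) n,
      w r * (f r - p.1 - p.2.1 * (r : ℝ) - p.2.2 * (r : ℝ) ^ 2) ^ 2) :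
    lam0 ≠ 0 ∧ (∃! p : ℝ × ℝ × ℝ, ∀ q : ℝ × ℝ × ℝ, E p ≤ E q) ∧
    ∀ p : ℝ × ℝ × ℝ, (∀ q : ℝ × ℝ × ℝ, E p ≤ E q) →
      p.1 + 1 / 4 * p.2.1 + 1 / 16 * p.2.2 =
        (α0 / (16 * lam0)) * ∑ r ∈ Finset.Icc (-n + 1) n,
          ((r : ℝ) ^ 2 * α0 * α2 + 4 * α0 * α4 * (r : ℝ) - 4 * α0 * α3 * (r : ℝ) ^ 2
            - α0 * α3 * (r : ℝ) - α2 ^ 2 - 4 * α2 ^ 2 * (r : ℝ) - 16 * (r : ℝ) ^ 2 * α2 ^ 2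
            + α1 * α2 * (r : ℝ) + 4 * α2 * α3 + 4 * α1 * α2 * (r : ℝ) ^ 2
            + 16 * α2 * α3 * (r : ℝ) + 16 * α2 * α4 - 16 * α1 * α4 * (r : ℝ) + α1 * α3
            - 16 * α3 ^ 2 - (r : ℝ) ^ 2 * α1 ^ 2 + 16 * (r : ℝ) ^ 2 * α1 * α3
            - 4 * α1 * α4) * w r * f r ∧
      p.1 + 3 / 4 * p.2.1 + 9 / 16 * p.2.2 =
        (α0 / (16 * lam0)) * ∑ r ∈ Finset.Icc (-n + 1) n,
          (9 * (r : ℝ) ^ 2 * α0 * α2 + 12 * α0 * α4 * (r : ℝ) - 9 * α0 * α3 * (r : ℝ)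
            - 12 * α0 * α3 * (r : ℝ) ^ 2 - 12 * α2 ^ 2 * (r : ℝ) - 9 * α2 ^ 2
            - 16 * (r : ℝ) ^ 2 * α2 ^ 2 + 9 * α1 * α2 * (r : ℝ) + 12 * α1 * α2 * (r : ℝ) ^ 2
            + 16 * α2 * α4 + 12 * α2 * α3 + 16 * α2 * α3 * (r : ℝ) + 9 * α1 * α3
            - 16 * α1 * α4 * (r : ℝ) - 12 * α1 * α4 - 9 * (r : ℝ) ^ 2 * α1 ^ 2
            + 16 * (r : ℝ) ^ 2 * α1 * α3 - 16 * α3 ^ 2) * w r * f r := by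
  set S := Finset.Icc (-n + 1) n
  have h0 : α0 = moment S w Int.cast 0 := by simp [hα0, moment]
  have h1 : α1 = moment S w Int.cast 1 := by simp [hα1, moment]
  have h2 : α2 = moment S w Int.cast 2 := hα2
  have h3 : α3 = moment S w Int.cast 3 := hα3
  have h4 : α4 = moment S w Int.cast 4 := hα4
  subst h0 h1 h2 h3 h4
  obtain rfl : E = lsqError S w Int.cast f := funext fun p => by
    rw [hE, lsqError]
    exact Finset.sum_congr rfl fun r _ => by simp only [quadEval]; ring
  have hx : 2 < (S.image (Int.cast : ℤ → ℝ)).card := by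
    rw [Finset.card_image_of_injective _ Int.cast_injective, Int.card_Icc]; omega
  obtain ⟨hα0, hD⟩ :=
    pos_and_hankelDet_pos_of_hankelForm_pos fun c hc => hankelForm_moment_pos hw hx hc
  have hlam : lam0 = moment S w Int.cast 0 * hankelDet (moment S w Int.cast) := by
    rw [hlam0, hχ0, hχ1, hχ3, hankelDet]; ring
  have hmin := lsqError_isMin_iff (f := f) hw hx
  refine ⟨hlam ▸ (mul_pos hα0 hD).ne', ⟨_, (hmin _).2 rfl, fun p hp => (hmin p).1 hp⟩, ?_⟩
  rintro p hp
  obtain rfl := (hmin p).1 hp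
  constructor
  · calc _ = quadEval (fitCoeffs S w Int.cast f) (1 / 4) := by simp only [quadEval]; ring
      _ = _ := by
        rw [quadEval_fitCoeffs, Finset.mul_sum]
        refine Finset.sum_congr rfl fun r _ => ?_
        rw [hlam]; simp only [hankelSolve, quadEval]; field_simp; ring
  · calc _ = quadEval (fitCoeffs S w Int.cast f) (3 / 4) := by simp only [quadEval]; ring
      _ = _ := by
        rw [quadEval_fitCoeffs, Finset.mul_sum]
        refine Finset.sum_congr rfl fun r _ => ?_
        rw [hlam]; simp only [hankelSolve, quadEval]; field_simp; ring
end
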